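/- arXiv:1306.0771 — 5 statements merged into one kernel-verified Lean document; each statement's English description precedes it below -/
import Mathlib

section
/- For odd n, the sequence W_n = a_1,a_0,a_2,a_0,...,a_{⌊n/2⌋},a_0,a_{⌈n/2⌉} (a_0 in every even position, all other items distinct) has naive-algorithm aggregate frequency n/4 + 3/(4n). -/
open scoped BigOperators

noncomputable section

/-- frequency of item `a` in sequence `I` -/
def freq (I : List ℕ) (a : ℕ) : ℝ := (I.count a : ℝ) / (I.length : ℝ)

/-- profit (aggregate frequency) of buffer sequence `S` against input `I` -/
def profit (I S : List ℕ) : ℝ := (S.map (freq I)).sum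

/-- Naive algorithm: buffers every arriving item. -/
def naiP (I : List ℕ) : ℝ := profit I I

/-- Buffers of the eager algorithm: buffer each arriving item until the first
repeated item (two equal consecutive items), then keep it forever. -/
def eagRun : List ℕ → List ℕ
  | [] => []
  | [x] => [x]
  | x :: y :: rest =>
      if x = y then x :: List.replicate (rest.length + 1) x
      else x :: eagRun (y :: rest)

def eagP (I : List ℕ) : ℝ := profit I (eagRun I)

/-- One step of the Majority algorithm on state (buffer, counter). -/
def majStep (s : ℕ × ℕ) (a : ℕ) : ℕ × ℕ :=
  if s.2 = 0 then (a, 1)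
  else if a = s.1 then (s.1, s.2 + 1)
  else (s.1, s.2 - 1)

def majBuffers (I : List ℕ) : List ℕ :=
  ((List.scanl majStep ((0 : ℕ), (0 : ℕ)) I).tail).map Prod.fst

def majP (I : List ℕ) : ℝ := profit I (majBuffers I)

/-- A valid offline buffer schedule: at each step the buffer holds either the
currently arriving item or the previously buffered item (the first buffered
item must be the first arriving item). -/
def ValidSched (I S : List ℕ) : Prop :=
  S.length = I.length ∧
    ∀ i, i < S.length →
      S.getD i 0 = I.getD i 0 ∨ (0 < i ∧ S.getD i 0 = S.getD (i - 1) 0)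

/-- Optimal offline profit. -/
def optP (I : List ℕ) : ℝ := sSup {x | ∃ S, ValidSched I S ∧ x = profit I S}

/-- Worst-permutation value of an algorithm's profit. -/
def worstP (f : List ℕ → ℝ) (I : List ℕ) : ℝ := sInf {x | ∃ J, J.Perm I ∧ x = f J}

/-- E_n = a,a,b,b,...,b with n-2 copies of b. -/
def Eseq (n a b : ℕ) : List ℕ := a :: a :: List.replicate (n - 2) b

/-- W_n = a_1,a_0,a_2,a_0,... with item 0 playing the role of a_0. -/
def Wseq (n : ℕ) : List ℕ :=
  ((List.range (n / 2)).flatMap fun i => [i + 1, 0]) ++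
    (if n % 2 = 1 then [n / 2 + 1] else [])

/-- W'_n = a_1,...,a_⌈n/2⌉,a_0,...,a_0 with ⌊n/2⌋ copies of a_0 = 0. -/
def Wseq' (n : ℕ) : List ℕ :=
  ((List.range ((n + 1) / 2)).map (· + 1)) ++ List.replicate (n / 2) 0

/-- I_n = ⌈n/2⌉ copies of a_0 = 0 followed by ⌊n/2⌋ distinct items. -/
def Iseq (n : ℕ) : List ℕ :=
  List.replicate ((n + 1) / 2) 0 ++ (List.range (n / 2)).map (· + 1)

/-- D(I): the items of `I` listed in nondecreasing order of frequency. -/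
def Dsort (I : List ℕ) : List ℕ :=
  List.insertionSort (fun x y => I.count x ≤ I.count y) I

/-- The interleaving permutation a'_1, a'_n, a'_2, a'_{n-1}, ... of a list. -/
def interleave : List ℕ → List ℕ
  | [] => []
  | x :: xs => x :: interleave xs.reverse
termination_by l => l.length
decreasing_by set_option linter.unnecessarySimpa false in simpa using Nat.lt_succ_self xs.length

/-- max over sequences of length n of f(I) - g(I). -/
def maxDiff (f g : List ℕ → ℝ) (n : ℕ) : ℝ :=
  sSup {d | ∃ I : List ℕ, I.length = n ∧ d = f I - g I}

/-- min over sequences of length n of f(I) - g(I). -/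
def minDiff (f g : List ℕ → ℝ) (n : ℕ) : ℝ :=
  sInf {d | ∃ I : List ℕ, I.length = n ∧ d = f I - g I}

/-- A deterministic online algorithm for the single-buffer frequent items
problem: the buffer after each nonempty prefix is either the arriving item or
the previous buffer content. -/
structure OnlineAlg where
  buf : List ℕ → ℕ
  first : ∀ x, buf [x] = x
  step : ∀ l x, l ≠ [] → buf (l ++ [x]) = x ∨ buf (l ++ [x]) = buf l

/-- Profit of an online algorithm on input `I`. -/
def oprofit (A : OnlineAlg) (I : List ℕ) : ℝ :=
  ∑ t ∈ Finset.range I.length, freq I (A.buf (I.take (t + 1)))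

end

/-!
Buffering every item earns `(1/n) ∑ₐ count(a)²`. In `W_n` with `n = 2k + 1` the item `a₀` occurs
`k` times and the other `k + 1` items once each, so `Nai(W_n) = (k² + k + 1) / (2k + 1)`.
-/

lemma naiP_eq_sum_count_div_length (I : List ℕ) :
    naiP I = ((I.map I.count).sum : ℝ) / I.length := by
  rw [naiP, profit, Nat.cast_list_sum, List.map_map, div_eq_mul_inv, ← List.sum_map_mul_right]
  rfl

lemma List.sum_map_count_of_count_le_one {α : Type*} [DecidableEq α] (l : List α) (a₀ : α)
    (h : ∀ a ≠ a₀, l.count a ≤ 1) :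
    (l.map l.count).sum = l.count a₀ ^ 2 + (l.length - l.count a₀) := by
  have hsq : ∀ a ≠ a₀, l.count a • l.count a = l.count a := fun a ha => by
    have := h a ha
    interval_cases l.count a <;> rfl
  have hlen := List.sum_toFinset_count_eq_length l
  rw [Finset.sum_list_map_count]
  by_cases ha₀ : a₀ ∈ l
  · have hmem := List.mem_toFinset.2 ha₀
    rw [← Finset.add_sum_erase _ _ hmem] at hlen ⊢
    rw [Finset.sum_congr rfl fun a ha => hsq a (Finset.ne_of_mem_erase ha), smul_eq_mul, sq]
    omega
  · have hne : ∀ a ∈ l.toFinset, a ≠ a₀ := fun a ha h => ha₀ (h ▸ List.mem_toFinset.1 ha)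
    rw [Finset.sum_congr rfl fun a ha => hsq a (hne a ha), hlen, List.count_eq_zero.2 ha₀]
    simp

lemma naiP_of_count_le_one (I : List ℕ) (a₀ : ℕ) (h : ∀ a ≠ a₀, I.count a ≤ 1) :
    naiP I = ((I.count a₀ ^ 2 + (I.length - I.count a₀) : ℕ) : ℝ) / I.length := by
  rw [naiP_eq_sum_count_div_length, I.sum_map_count_of_count_le_one a₀ h]

lemma count_flatMap_range_succ_zero (k j : ℕ) :
    ((List.range k).flatMap fun i => [i + 1, 0]).count j
      = if j = 0 then k else if j ≤ k then 1 else 0 := by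
  induction k with
  | zero => cases j <;> simp
  | succ k ih =>
    rw [List.range_succ, List.flatMap_append, List.count_append, ih]
    simp only [List.flatMap_cons, List.flatMap_nil, List.append_nil, List.count_cons,
      List.count_nil, beq_iff_eq]
    split_ifs <;> omega

lemma Wseq_two_mul_add_one (k : ℕ) :
    Wseq (2 * k + 1) = ((List.range k).flatMap fun i => [i + 1, 0]) ++ [k + 1] := by
  simp [Wseq, Nat.mul_add_div]

lemma length_Wseq_two_mul_add_one (k : ℕ) : (Wseq (2 * k + 1)).length = 2 * k + 1 := by
  simp only [Wseq_two_mul_add_one, List.length_append, List.length_flatMap, List.length_cons,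
    List.length_nil, List.map_const', List.length_range, List.sum_replicate, smul_eq_mul]
  omega

lemma count_Wseq_two_mul_add_one (k j : ℕ) : (Wseq (2 * k + 1)).count j =
    (if j = 0 then k else if j ≤ k then 1 else 0) + if j = k + 1 then 1 else 0 := by
  rw [Wseq_two_mul_add_one, List.count_append, count_flatMap_range_succ_zero]
  simp only [List.count_singleton, beq_iff_eq]
  split_ifs <;> omega

/-- for odd n, Nai(W_n) = n/4 + 3/(4n). -/
theorem stmt3 (n : ℕ) (ho : Odd n) :
    naiP (Wseq n) = (n : ℝ) / 4 + 3 / (4 * n) := by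
  obtain ⟨k, rfl⟩ := ho
  have hcount_le : ∀ j ≠ 0, (Wseq (2 * k + 1)).count j ≤ 1 := fun j hj => by
    rw [count_Wseq_two_mul_add_one]
    split_ifs <;> omega
  have hcount_zero : (Wseq (2 * k + 1)).count 0 = k := by simp [count_Wseq_two_mul_add_one]
  rw [naiP_of_count_le_one _ 0 hcount_le, hcount_zero, length_Wseq_two_mul_add_one,
    show 2 * k + 1 - k = k + 1 by omega]
  push_cast
  field_simp
  ring
end

section
/- For the sequence W_n (a_0 in every even position, all other items distinct, n ≥ 2), the aggregate frequency of the majority algorithm equals 1. -/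
open scoped BigOperators

/-
On `W_n` every second item is `a_0`, which differs from the buffered item, so the counter of Maj
falls back to `0` after each pair `a_i, a_0`: Maj buffers `a_i` at both steps of the pair and never
buffers `a_0`. Every buffered item thus occurs exactly once in `W_n` and contributes `1/n` at each of
the `n` steps.
-/

theorem tail_scanl_majStep_of_counter_eq_zero (b : ℕ) (l : List ℕ) :
    (List.scanl majStep (b, 0) l).tail = (List.scanl majStep (0, 0) l).tail := by
  cases l <;> simp [majStep]

theorem length_majBuffers (I : List ℕ) : (majBuffers I).length = I.length := by
  simp [majBuffers]

theorem majBuffers_singleton (x : ℕ) : majBuffers [x] = [x] := by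
  simp [majBuffers, majStep]

theorem majBuffers_cons_cons {x a : ℕ} (hxa : x ≠ a) (l : List ℕ) :
    majBuffers (x :: a :: l) = x :: x :: majBuffers l := by
  have hx : majStep (0, 0) x = (x, 1) := by simp [majStep]
  have ha : majStep (x, 1) a = (x, 0) := by simp [majStep, Ne.symm hxa]
  simp only [majBuffers, List.scanl_cons, hx, ha, List.tail_cons]
  rw [← tail_scanl_majStep_of_counter_eq_zero x l]
  cases l <;> simp

theorem majBuffers_flatMap_pair_append {ι : Type*} (f : ι → ℕ) (a : ℕ) (l : List ι)
    (hl : ∀ i ∈ l, f i ≠ a) (t : List ℕ) :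
    majBuffers (l.flatMap (fun i => [f i, a]) ++ t) =
      l.flatMap (fun i => [f i, f i]) ++ majBuffers t := by
  induction l with
  | nil => rfl
  | cons i l ih =>
    simp only [List.flatMap_cons, List.cons_append, List.nil_append]
    rw [majBuffers_cons_cons (hl i List.mem_cons_self),
      ih fun j hj => hl j (List.mem_cons_of_mem i hj)]

theorem count_flatMap_pair {ι : Type*} (f : ι → ℕ) {a b : ℕ} (hab : a ≠ b) (l : List ι) :
    (l.flatMap fun i => [f i, b]).count a = (l.map f).count a := by
  induction l with
  | nil => rfl
  | cons i l ih => simp [List.count_cons, ih]; omega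

theorem length_Wseq (n : ℕ) : (Wseq n).length = n := by
  simp only [Wseq, List.length_append, List.length_flatMap, List.length_cons, List.length_nil]
  split_ifs <;> simp <;> omega

theorem majBuffers_Wseq (n : ℕ) :
    majBuffers (Wseq n) =
      (List.range (n / 2)).flatMap (fun i => [i + 1, i + 1]) ++
        (if n % 2 = 1 then [n / 2 + 1] else []) := by
  rw [Wseq, majBuffers_flatMap_pair_append _ _ _ (by simp)]
  split_ifs
  · rw [majBuffers_singleton]
  · rfl

theorem count_Wseq {n a : ℕ} (h1 : 1 ≤ a) (h2 : a ≤ (n + 1) / 2) : (Wseq n).count a = 1 := by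
  obtain ⟨b, rfl⟩ : ∃ b, a = b + 1 := ⟨a - 1, by omega⟩
  rw [Wseq, List.count_append, count_flatMap_pair _ (by omega),
    List.count_map_of_injective _ _ (add_left_injective 1), List.count_range]
  split_ifs <;> simp [List.count_singleton] <;> omega

theorem profit_eq_of_forall_count_eq_one {I S : List ℕ} (h : ∀ s ∈ S, I.count s = 1) :
    profit I S = S.length / I.length := by
  rw [profit, List.sum_eq_card_nsmul _ (1 / (I.length : ℝ)) ?_, List.length_map, nsmul_eq_mul,
    mul_one_div]
  simp only [List.mem_map]
  rintro _ ⟨s, hs, rfl⟩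
  rw [freq, h s hs, Nat.cast_one]

/-- Maj(W_n) = 1. -/
theorem stmt4 (n : ℕ) (hn : 2 ≤ n) :
    majP (Wseq n) = 1 := by
  have hcount : ∀ s ∈ majBuffers (Wseq n), (Wseq n).count s = 1 := by
    intro s hs
    rw [majBuffers_Wseq] at hs
    apply count_Wseq <;> split_ifs at hs <;> simp at hs <;> omega
  rw [majP, profit_eq_of_forall_count_eq_one hcount, length_majBuffers, length_Wseq]
  exact div_self (Nat.cast_ne_zero.mpr (by omega))
end

section
/- For the sequence E_n = a,a,b,...,b (n-2 copies of b, a ≠ b, n ≥ 4), the aggregate frequency of the majority algorithm equals n - 6 + 16/n. -/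
open scoped BigOperators

/-!
Majority keeps `a` for the first four steps: the two copies of `a` raise its counter to 2
and the next two copies of `b` bring it back to 0 without evicting `a`. From the fifth step on
`b` is buffered with a positive counter that only grows. Hence the buffers are
`a, a, a, a, b, …, b` and the profit is `4 · 2/n + (n - 4)(n - 2)/n = n - 6 + 16/n`.
-/

lemma profit_cons (I S : List ℕ) (x : ℕ) : profit I (x :: S) = freq I x + profit I S := by
  simp [profit]

lemma profit_replicate (I : List ℕ) (k x : ℕ) : profit I (List.replicate k x) = k * freq I x := by
  simp [profit, List.map_replicate, List.sum_replicate, nsmul_eq_mul]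

lemma majStep_of_pos_of_eq (b c : ℕ) : majStep (b, c + 1) b = (b, c + 2) := by
  simp [majStep]

lemma majStep_of_pos_of_ne {a b : ℕ} (c : ℕ) (hab : a ≠ b) : majStep (a, c + 1) b = (a, c) := by
  simp [majStep, hab.symm]

lemma majStep_of_zero (a b : ℕ) : majStep (a, 0) b = (b, 1) := by
  simp [majStep]

lemma map_fst_scanl_majStep_replicate_of_pos (b : ℕ) (k c : ℕ) :
    (List.scanl majStep (b, c + 1) (List.replicate k b)).map Prod.fst
      = List.replicate (k + 1) b := by
  induction k generalizing c with
  | zero => simp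
  | succ k ih =>
    simp [List.replicate_succ, List.scanl_cons, majStep_of_pos_of_eq, ih (c + 1)]

lemma map_fst_scanl_majStep_replicate_of_zero (a b m : ℕ) :
    (List.scanl majStep (a, 0) (List.replicate m b)).map Prod.fst
      = a :: List.replicate m b := by
  cases m with
  | zero => simp
  | succ m =>
    simp [List.replicate_succ, List.scanl_cons, majStep_of_zero,
      map_fst_scanl_majStep_replicate_of_pos b m 0]

lemma majBuffers_Eseq {n a b : ℕ} (hab : a ≠ b) (hn : 4 ≤ n) :
    majBuffers (Eseq n a b) = a :: a :: a :: a :: List.replicate (n - 4) b := by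
  obtain ⟨m, rfl⟩ : ∃ m, n = m + 4 := ⟨n - 4, by omega⟩
  simp [majBuffers, Eseq, List.replicate_succ, List.scanl_cons, majStep_of_zero,
    majStep_of_pos_of_eq, majStep_of_pos_of_ne _ hab,
    map_fst_scanl_majStep_replicate_of_zero a b m]

lemma length_Eseq {n : ℕ} (a b : ℕ) (hn : 2 ≤ n) : (Eseq n a b).length = n := by
  simp [Eseq]; omega

lemma count_Eseq_left {a b : ℕ} (n : ℕ) (hab : a ≠ b) : (Eseq n a b).count a = 2 := by
  simp [Eseq, List.count_replicate, hab.symm]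

lemma count_Eseq_right {a b : ℕ} (n : ℕ) (hab : a ≠ b) : (Eseq n a b).count b = n - 2 := by
  simp [Eseq, hab]

/-- Maj(E_n) = n - 6 + 16/n. -/
theorem stmt5 (n a b : ℕ) (hab : a ≠ b) (hn : 4 ≤ n) :
    majP (Eseq n a b) = (n : ℝ) - 6 + 16 / n := by
  have hfa : freq (Eseq n a b) a = 2 / n := by
    simp [freq, count_Eseq_left n hab, length_Eseq a b (by omega : 2 ≤ n)]
  have hfb : freq (Eseq n a b) b = ((n : ℝ) - 2) / n := by
    rw [freq, count_Eseq_right n hab, length_Eseq a b (by omega), Nat.cast_sub (by omega)]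
    norm_num
  have hn0 : (n : ℝ) ≠ 0 := by positivity
  rw [majP, majBuffers_Eseq hab hn]
  simp only [profit_cons, profit_replicate, hfa, hfb, Nat.cast_sub hn]
  field_simp
  ring
end

section
/- For any input I of length n and for the worst-case permutation of I for the majority algorithm, the aggregate frequency of Maj equals 2·Σ_{i=1}^{⌊n/2⌋} f_I(a'_i) + (n mod 2)·f_I(a'_{⌈n/2⌉}), where a'_1,...,a'_n lists the items of I in nondecreasing order of frequency; in particular, at least ⌈n/2⌉ time steps contribute and this minimum is achieved by the interleaving permutation a'_1, a'_n, a'_2, a'_{n-1}, .... -/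
open scoped BigOperators

/-
Weigh each buffered item by its count in `I`, so that the profit of Maj on a permutation is
this total weight divided by `n`. Every step that buffers `a` is paid for either by an arrival of
`a` or by a vote of `a` (a unit of the counter while `a` is buffered), and each arrival of `a`
creates at most one vote; so `a` is buffered at most `2 · count a` times. The buffers therefore
form a sub-multiset of the doubled input, and weigh at least its `n` lightest entries, which is
the stated sum. Feeding Maj the lightest and the heaviest remaining items alternately attains
this: from a state whose counter is zero or whose buffer weighs as much as every remaining item,
these two arrivals cost at most twice the lighter weight and lead to a state of the same kind.
Finally every weight is at least one, so the value is at least `n / n ≥ ⌈n/2⌉ / n`.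
-/

open Finset

section Stutter

variable {α : Type*}

def stutter (L : List α) : List α := L.flatMap fun a => [a, a]

@[simp] theorem stutter_nil : stutter ([] : List α) = [] := rfl

@[simp] theorem stutter_cons (a : α) (L : List α) : stutter (a :: L) = a :: a :: stutter L := rfl

@[simp] theorem stutter_append (L M : List α) : stutter (L ++ M) = stutter L ++ stutter M :=
  List.flatMap_append

@[simp] theorem length_stutter (L : List α) : (stutter L).length = 2 * L.length := by
  induction L with
  | nil => rfl
  | cons a L ih => simp only [stutter_cons, List.length_cons, ih]; ring

@[simp] theorem mem_stutter {a : α} {L : List α} : a ∈ stutter L ↔ a ∈ L := by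
  simp [stutter]

theorem count_stutter [BEq α] [LawfulBEq α] (L : List α) (a : α) :
    (stutter L).count a = 2 * L.count a := by
  induction L with
  | nil => rfl
  | cons b L ih => simp only [stutter_cons, List.count_cons, ih]; split_ifs <;> omega

theorem pairwise_stutter {r : α → α → Prop} (hr : ∀ a, r a a) {L : List α}
    (hL : L.Pairwise r) : (stutter L).Pairwise r := by
  induction hL with
  | nil => simp
  | cons hab _ ih => simp_all [List.pairwise_cons]

/-- When `L` is sorted by `c`, the sum of the `|L|` smallest weights in the multiset where every
entry of `L` occurs twice. -/
def stutterCost (c : α → ℕ) (L : List α) : ℕ := (((stutter L).map c).take L.length).sum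

theorem stutterCost_cons_append (c : α → ℕ) (x y : α) (M : List α) :
    stutterCost c (x :: (M ++ [y])) = 2 * c x + stutterCost c M := by
  have hM : M.length ≤ ((stutter M).map c).length := by
    simp only [List.length_map, length_stutter]; omega
  simp only [stutterCost, List.length_cons, List.length_append, List.length_nil, zero_add,
    stutter_cons, stutter_append, stutter_nil, List.map_cons, List.map_append, List.map_nil,
    List.take_succ_cons, List.take_append_of_le_length hM, List.sum_cons]
  ring

theorem sum_take_map_stutter (c : α → ℕ) (d : α) :
    ∀ (L : List α) (k : ℕ), k ≤ 2 * L.length →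
      (((stutter L).map c).take k).sum =
        2 * ∑ i ∈ range (k / 2), c (L.getD i d) + k % 2 * c (L.getD (k / 2) d)
  | _, 0, _ => by simp
  | [], _ + 1, h => by simp at h
  | _ :: _, 1, _ => by simp
  | a :: L, k + 2, h => by
      have ih := sum_take_map_stutter c d L k (by simp only [List.length_cons] at h; omega)
      simp only [stutter_cons, List.map_cons, List.take_succ_cons, List.sum_cons, ih]
      rw [show (k + 2) / 2 = k / 2 + 1 by omega, show (k + 2) % 2 = k % 2 by omega,
        sum_range_succ']
      simp only [List.getD_cons_succ, List.getD_cons_zero]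
      ring

theorem stutterCost_eq (c : α → ℕ) (d : α) (L : List α) :
    stutterCost c L = 2 * ∑ i ∈ range (L.length / 2), c (L.getD i d) +
      L.length % 2 * c (L.getD (L.length / 2) d) :=
  sum_take_map_stutter c d L L.length (by omega)

theorem length_le_stutterCost {c : α → ℕ} {L : List α} (hc : ∀ a ∈ L, 1 ≤ c a) :
    L.length ≤ stutterCost c L := by
  have h := List.length_le_sum_of_one_le (((stutter L).map c).take L.length) fun n hn => by
    obtain ⟨a, ha, rfl⟩ := List.mem_map.1 (List.mem_of_mem_take hn)
    exact hc a (mem_stutter.1 ha)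
  simpa [stutterCost, show L.length ≤ 2 * L.length by omega] using h

end Stutter

section SumOfSmallest

variable {β : Type*} [AddCommMonoid β] [PartialOrder β] [IsOrderedAddMonoid β]

theorem sum_take_cons_le {x : β} {w : List β} (hx : ∀ y ∈ w, x ≤ y)
    (hw : w.Pairwise (· ≤ ·)) {k : ℕ} (hk : k ≤ w.length) :
    ((x :: w).take k).sum ≤ (w.take k).sum := by
  induction w generalizing x k with
  | nil => simp_all
  | cons y w ih =>
    obtain ⟨hy, hw⟩ := List.pairwise_cons.1 hw
    cases k with
    | zero => simp
    | succ k =>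
      simp only [List.take_succ_cons, List.sum_cons]
      calc x + ((y :: w).take k).sum ≤ x + (w.take k).sum :=
            add_le_add_right (ih hy hw (by simpa using hk)) x
        _ ≤ y + (w.take k).sum := add_le_add_left (hx y (by simp)) _

theorem sum_take_card_le_sum {w : List β} (hw : w.Pairwise (· ≤ ·)) {u : Multiset β}
    (hu : u ≤ w) : (w.take (Multiset.card u)).sum ≤ u.sum := by
  induction w generalizing u with
  | nil => simp [Multiset.le_zero.1 (by simpa using hu)]
  | cons x w ih =>
    obtain ⟨hx, hw⟩ := List.pairwise_cons.1 hw
    rw [← Multiset.cons_coe] at hu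
    by_cases hxu : x ∈ u
    · obtain ⟨u, rfl⟩ := Multiset.exists_cons_of_mem hxu
      simpa using add_le_add_right (ih hw ((Multiset.cons_le_cons_iff x).1 hu)) x
    · have hu := (Multiset.le_cons_of_notMem hxu).1 hu
      exact (sum_take_cons_le hx hw (by simpa using Multiset.card_le_card hu)).trans (ih hw hu)

end SumOfSmallest

theorem stutterCost_le_sum_map {α : Type*} [DecidableEq α] {c : α → ℕ} {L S : List α}
    (hL : L.Pairwise (c · ≤ c ·)) (hS : S.length = L.length)
    (hcount : ∀ a, S.count a ≤ 2 * L.count a) : stutterCost c L ≤ (S.map c).sum := by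
  have hle : (S : Multiset α) ≤ stutter L :=
    Multiset.le_iff_count.2 fun a => by simpa [count_stutter] using hcount a
  have hsorted : ((stutter L).map c).Pairwise (· ≤ ·) :=
    List.pairwise_map.2 (pairwise_stutter (fun a => le_refl (c a)) hL)
  simpa [stutterCost, hS] using
    sum_take_card_le_sum hsorted (u := (S.map c : List ℕ)) (by simpa using Multiset.map_le_map hle)

def majRun : ℕ × ℕ → List ℕ → List ℕ
  | _, [] => []
  | s, a :: N => (majStep s a).1 :: majRun (majStep s a) N

theorem map_fst_scanl_majStep (s : ℕ × ℕ) (N : List ℕ) :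
    (List.scanl majStep s N).map Prod.fst = s.1 :: majRun s N := by
  induction N generalizing s <;> simp [majRun, List.scanl_cons, *]

theorem majBuffers_eq_majRun (J : List ℕ) : majBuffers J = majRun (0, 0) J := by
  rw [majBuffers, List.map_tail, map_fst_scanl_majStep, List.tail_cons]

@[simp] theorem length_majRun (s : ℕ × ℕ) (N : List ℕ) : (majRun s N).length = N.length := by
  induction N generalizing s <;> simp [majRun, *]

theorem majStep_fst_eq_or_eq (s : ℕ × ℕ) (a : ℕ) :
    (majStep s a).1 = s.1 ∨ (majStep s a).1 = a := by
  unfold majStep; split_ifs <;> simp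

def majVotes (s : ℕ × ℕ) (a : ℕ) : ℕ := if a = s.1 then s.2 else 0

theorem count_majRun_add_majVotes_le (s : ℕ × ℕ) (N : List ℕ) (a : ℕ) :
    (majRun s N).count a + majVotes (N.foldl majStep s) a ≤ 2 * N.count a + majVotes s a := by
  induction N generalizing s with
  | nil => simp [majRun]
  | cons x N ih =>
    have h := ih (majStep s x)
    simp only [majRun, List.foldl_cons, List.count_cons, beq_iff_eq, majVotes] at h ⊢
    unfold majStep at h ⊢
    split_ifs at h ⊢ <;> omega

theorem count_majBuffers_le (J : List ℕ) (a : ℕ) : (majBuffers J).count a ≤ 2 * J.count a := by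
  have h := count_majRun_add_majVotes_le (0, 0) J a
  simp only [majVotes, ite_self, add_zero] at h
  rw [majBuffers_eq_majRun]
  omega

theorem interleave_perm : ∀ l : List ℕ, (interleave l).Perm l
  | [] => by rw [interleave]
  | x :: xs => by
      rw [interleave]
      exact ((interleave_perm xs.reverse).trans xs.reverse_perm).cons x
termination_by l => l.length
decreasing_by simp

theorem interleave_cons_append (x y : ℕ) (M : List ℕ) :
    interleave (x :: (M ++ [y])) = x :: y :: interleave M := by
  rw [interleave, List.reverse_append, List.reverse_singleton, List.singleton_append, interleave,
    List.reverse_reverse]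

theorem interleave_singleton (x : ℕ) : interleave [x] = [x] := by
  rw [interleave, List.reverse_nil, interleave]

theorem majStep_majStep_weight (c : ℕ → ℕ) {s : ℕ × ℕ} {x y : ℕ} {M : List ℕ}
    (hxM : ∀ m ∈ M, c x ≤ c m) (hMy : ∀ m ∈ M, c m ≤ c y)
    (hs : s.2 = 0 ∨ ∀ m ∈ x :: (M ++ [y]), c m = c s.1) :
    c (majStep s x).1 + c (majStep (majStep s x) y).1 ≤ 2 * c x ∧
      ((majStep (majStep s x) y).2 = 0 ∨ ∀ m ∈ M, c m = c (majStep (majStep s x) y).1) := by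
  rcases hs with hs | hall
  · by_cases hyx : y = x
    · subst hyx
      simp only [majStep, hs, if_true, one_ne_zero, if_false]
      exact ⟨by omega, Or.inr fun m hm => le_antisymm (hMy m hm) (hxM m hm)⟩
    · simp [majStep, hs, hyx, two_mul]
  · have h1 : c (majStep s x).1 = c s.1 := by
      rcases majStep_fst_eq_or_eq s x with h | h <;> rw [h]
      exact hall x (by simp)
    have h2 : c (majStep (majStep s x) y).1 = c s.1 := by
      rcases majStep_fst_eq_or_eq (majStep s x) y with h | h <;> rw [h]
      · exact h1
      · exact hall y (by simp)
    rw [h1, h2, hall x (by simp)]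
    exact ⟨by omega, Or.inr fun m hm => hall m (by simp [hm])⟩

theorem majRun_interleave_weight_le (c : ℕ → ℕ) {M : List ℕ} (hM : M.Pairwise (c · ≤ c ·))
    {s : ℕ × ℕ} (hs : s.2 = 0 ∨ ∀ m ∈ M, c m = c s.1) :
    ((majRun s (interleave M)).map c).sum ≤ stutterCost c M := by
  induction M using List.bidirectionalRec generalizing s with
  | nil => rw [interleave]; simp [majRun, stutterCost]
  | singleton x =>
    suffices c (majStep s x).1 ≤ c x by
      simpa [interleave_singleton, majRun, stutterCost] using this
    rcases hs with hs | hall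
    · simp [majStep, hs]
    · rcases majStep_fst_eq_or_eq s x with h | h <;> rw [h]
      exact (hall x (by simp)).ge
  | cons_append x M y ih =>
    obtain ⟨hx, hM⟩ := List.pairwise_cons.1 hM
    obtain ⟨hM, -, hMy⟩ := List.pairwise_append.1 hM
    obtain ⟨hpair, hs⟩ := majStep_majStep_weight c (fun m hm => hx m (by simp [hm]))
      (fun m hm => hMy m hm y (by simp)) hs
    have := ih hM hs
    rw [interleave_cons_append, stutterCost_cons_append]
    simp only [majRun, List.map_cons, List.sum_cons]
    omega

theorem profit_eq_sum_map_count_div (I S : List ℕ) :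
    profit I S = ((S.map I.count).sum : ℝ) / I.length := by
  induction S with
  | nil => simp [profit]
  | cons a S ih => simp_all [profit, freq, add_div]

theorem majP_eq_of_perm {I J : List ℕ} (hJ : J.Perm I) :
    majP J = ((majBuffers J).map I.count).sum / I.length := by
  rw [majP, profit_eq_sum_map_count_div, hJ.length_eq, show J.count = I.count from funext hJ.count_eq]

theorem perm_Dsort (I : List ℕ) : (Dsort I).Perm I := List.perm_insertionSort _ I

theorem pairwise_Dsort (I : List ℕ) : (Dsort I).Pairwise (I.count · ≤ I.count ·) := by
  have : Std.Total (fun x y : ℕ => I.count x ≤ I.count y) := ⟨fun _ _ => Nat.le_total _ _⟩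
  have : IsTrans ℕ (fun x y : ℕ => I.count x ≤ I.count y) := ⟨fun _ _ _ => Nat.le_trans⟩
  exact List.pairwise_insertionSort _ I

theorem stutterCost_Dsort_le {I J : List ℕ} (hJ : J.Perm I) :
    stutterCost I.count (Dsort I) ≤ ((majBuffers J).map I.count).sum :=
  stutterCost_le_sum_map (pairwise_Dsort I)
    (by rw [majBuffers_eq_majRun, length_majRun, hJ.length_eq, (perm_Dsort I).length_eq])
    fun a => by
      rw [(perm_Dsort I).count_eq, ← hJ.count_eq]
      exact count_majBuffers_le J a

theorem majP_interleave_Dsort (I : List ℕ) :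
    majP (interleave (Dsort I)) = stutterCost I.count (Dsort I) / I.length := by
  have hperm := (interleave_perm (Dsort I)).trans (perm_Dsort I)
  rw [majP_eq_of_perm hperm]
  congr 2
  refine le_antisymm ?_ (stutterCost_Dsort_le hperm)
  rw [majBuffers_eq_majRun]
  exact majRun_interleave_weight_le _ (pairwise_Dsort I) (s := (0, 0)) (Or.inl rfl)

theorem isLeast_majP_interleave_Dsort (I : List ℕ) :
    IsLeast {x | ∃ J, J.Perm I ∧ x = majP J} (majP (interleave (Dsort I))) := by
  refine ⟨⟨_, (interleave_perm _).trans (perm_Dsort I), rfl⟩, ?_⟩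
  rintro _ ⟨J, hJ, rfl⟩
  rw [majP_eq_of_perm hJ, majP_interleave_Dsort]
  gcongr
  exact_mod_cast stutterCost_Dsort_le hJ

/-- the worst-permutation value of Maj equals
2·Σ_{i=1}^{⌊n/2⌋} f_I(a'_i) + (n mod 2)·f_I(a'_{⌈n/2⌉}) where a' = D(I);
at least ⌈n/2⌉ steps contribute, and the minimum is achieved by the
interleaving permutation a'_1, a'_n, a'_2, a'_{n-1}, .... -/
theorem stmt7 (I : List ℕ) :
    worstP majP I =
      2 * ∑ i ∈ Finset.range (I.length / 2), freq I ((Dsort I).getD i 0) +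
        ((I.length % 2 : ℕ) : ℝ) * freq I ((Dsort I).getD (I.length / 2) 0) ∧
    (((I.length + 1) / 2 : ℕ) : ℝ) * (1 / (I.length : ℝ)) ≤ worstP majP I ∧
    majP (interleave (Dsort I)) = worstP majP I := by
  have hworst : worstP majP I = stutterCost I.count (Dsort I) / I.length := by
    rw [worstP, (isLeast_majP_interleave_Dsort I).csInf_eq, majP_interleave_Dsort]
  have hlen := (perm_Dsort I).length_eq
  refine ⟨?_, ?_, by rw [hworst, majP_interleave_Dsort]⟩
  · rw [hworst, stutterCost_eq _ 0, hlen]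
    simp only [freq, ← sum_div]
    push_cast
    ring
  · have hcount : ∀ a ∈ Dsort I, 1 ≤ I.count a := fun a ha =>
      List.count_pos_iff.2 ((perm_Dsort I).subset ha)
    have := length_le_stutterCost hcount
    rw [hworst, mul_one_div]
    gcongr
    exact_mod_cast (by omega : (I.length + 1) / 2 ≤ (Dsort I).length).trans this
end

section
/- For every input sequence I of length n ≥ 1, Opt(I) ≤ (√n/(2 − 1/√n))·Nai(I); in particular the naive algorithm has competitive function √n/2. -/
open scoped BigOperators

noncomputable section

/-!
Let `c` be the largest multiplicity of an item in `I`, of length `n`. Every buffer schedule earns at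
most `c / n` per step, so `Opt(I) ≤ c`. The naive algorithm earns `∑ₐ count(a)² / n`, and since
`k² ≥ k` for every multiplicity other than `c`, this is at least `(c² + n - c) / n`. Finally
`c (2√n - 1) ≤ c² + n - c` is `(c - √n)² ≥ 0`.
-/

theorem List.exists_forall_count_le {α : Type*} [DecidableEq α] [Inhabited α] (l : List α) :
    ∃ a, ∀ b, l.count b ≤ l.count a := by
  rcases eq_or_ne l [] with rfl | hl
  · exact ⟨default, by simp⟩
  · obtain ⟨a, -, ha⟩ := Finset.exists_max_image _ (l.count ·) ((List.toFinset_nonempty_iff l).2 hl)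
    refine ⟨a, fun b => ?_⟩
    by_cases hb : b ∈ l
    · exact ha b (List.mem_toFinset.2 hb)
    · simp [List.count_eq_zero_of_not_mem hb]

theorem profit_le_of_forall_count_le {I S : List ℕ} {m : ℝ} (hS : S.length = I.length)
    (hm : ∀ a, (I.count a : ℝ) ≤ m) : profit I S ≤ m := by
  have hm0 : 0 ≤ m := (Nat.cast_nonneg _).trans (hm 0)
  have hfreq : ∀ x ∈ S.map (freq I), x ≤ m / I.length := by
    simp only [List.mem_map]
    rintro _ ⟨a, -, rfl⟩
    exact div_le_div_of_nonneg_right (hm a) (Nat.cast_nonneg _)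
  calc profit I S ≤ (S.map (freq I)).length • (m / I.length) := List.sum_le_card_nsmul _ _ hfreq
    _ ≤ m := by
      rw [List.length_map, nsmul_eq_mul, hS]
      rcases Nat.eq_zero_or_pos I.length with h0 | hpos
      · simpa [h0] using hm0
      · rw [mul_div_cancel₀ _ (by positivity)]

theorem optP_le_of_forall_count_le {I : List ℕ} {m : ℝ} (hm : ∀ a, (I.count a : ℝ) ≤ m) :
    optP I ≤ m :=
  csSup_le ⟨profit I I, I, ⟨rfl, fun _ _ => Or.inl rfl⟩, rfl⟩
    (by rintro _ ⟨S, ⟨hS, -⟩, rfl⟩; exact profit_le_of_forall_count_le hS hm)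

theorem naiP_eq_sum_count_sq_div (I : List ℕ) :
    naiP I = (∑ a ∈ I.toFinset, (I.count a : ℝ) ^ 2) / I.length := by
  rw [naiP, profit, Finset.sum_list_map_count, Finset.sum_div]
  refine Finset.sum_congr rfl fun a _ => ?_
  rw [freq, nsmul_eq_mul]
  ring

theorem count_mul_count_sub_one_le_sum (I : List ℕ) (a : ℕ) :
    (I.count a : ℝ) * (I.count a - 1) ≤ ∑ b ∈ I.toFinset, (I.count b : ℝ) * (I.count b - 1) := by
  have hnonneg : ∀ k : ℕ, 0 ≤ (k : ℝ) * (k - 1) := fun k => by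
    rcases k with _ | k
    · simp
    · push_cast; nlinarith
  by_cases ha : a ∈ I
  · exact Finset.single_le_sum (f := fun b => (I.count b : ℝ) * (I.count b - 1))
      (fun b _ => hnonneg _) (List.mem_toFinset.2 ha)
  · simpa [List.count_eq_zero_of_not_mem ha] using Finset.sum_nonneg fun b _ => hnonneg (I.count b)

theorem count_sq_add_length_sub_count_div_le_naiP (I : List ℕ) (a : ℕ) :
    ((I.count a : ℝ) ^ 2 + (I.length - I.count a)) / I.length ≤ naiP I := by
  rw [naiP_eq_sum_count_sq_div]
  gcongr
  have hlength : ∑ b ∈ I.toFinset, (I.count b : ℝ) = I.length := by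
    exact_mod_cast List.sum_toFinset_count_eq_length I
  have := count_mul_count_sub_one_le_sum I a
  calc (I.count a : ℝ) ^ 2 + (I.length - I.count a)
      ≤ ∑ b ∈ I.toFinset, (I.count b : ℝ) * (I.count b - 1) + I.length := by linarith
    _ = ∑ b ∈ I.toFinset, (I.count b : ℝ) ^ 2 := by
      rw [← hlength, ← Finset.sum_add_distrib]
      exact Finset.sum_congr rfl fun b _ => by ring

-- Equality at `M = s`: the worst case is an item of multiplicity `√n`.
theorem le_div_two_sub_inv_mul_sq_add_sub_div_sq {s : ℝ} (hs : 1 / 2 < s) (M : ℝ) :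
    M ≤ s / (2 - 1 / s) * ((M ^ 2 + (s ^ 2 - M)) / s ^ 2) := by
  have hs0 : 0 < s := by linarith
  have hrhs : s / (2 - 1 / s) * ((M ^ 2 + (s ^ 2 - M)) / s ^ 2)
      = (M ^ 2 + (s ^ 2 - M)) / (2 * s - 1) := by
    field_simp
  rw [hrhs, le_div_iff₀ (by linarith)]
  nlinarith [sq_nonneg (M - s)]

/-- Opt(I) ≤ (√n/(2 - 1/√n))·Nai(I) for every I of length n ≥ 1;
in particular Nai has competitive function √n/2. -/
theorem stmt9 (I : List ℕ) (h : 1 ≤ I.length) :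
    optP I ≤ Real.sqrt I.length / (2 - 1 / Real.sqrt I.length) * naiP I := by
  obtain ⟨a, ha⟩ := I.exists_forall_count_le
  have hs : 1 / 2 < Real.sqrt I.length := by
    rw [Real.lt_sqrt (by norm_num)]
    have : (1 : ℝ) ≤ I.length := by exact_mod_cast h
    linarith
  have hcoef : 0 ≤ Real.sqrt I.length / (2 - 1 / Real.sqrt I.length) :=
    div_nonneg (Real.sqrt_nonneg _) (by rw [sub_nonneg, div_le_iff₀ (by linarith)]; linarith)
  have hsq : Real.sqrt I.length ^ 2 = I.length := Real.sq_sqrt (Nat.cast_nonneg _)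
  calc optP I ≤ I.count a := optP_le_of_forall_count_le fun b => by exact_mod_cast ha b
    _ ≤ Real.sqrt I.length / (2 - 1 / Real.sqrt I.length)
          * (((I.count a : ℝ) ^ 2 + (I.length - I.count a)) / I.length) := by
      simpa only [hsq] using le_div_two_sub_inv_mul_sq_add_sub_div_sq hs (I.count a)
    _ ≤ _ := mul_le_mul_of_nonneg_left (count_sq_add_length_sub_count_div_le_naiP I a) hcoef
end
end
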